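/- Let F be a field of characteristic p > 0, let {a₁,…,aₙ} ⊆ F* be p-independent over F (so π = ⟪a₁,…,aₙ⟫ is anisotropic over F), let 1 ≤ s ≤ n, and set σ = ⟨1,a₁,…,a_s⟩. Let E/F be a field extension and set ℓ = dim(σ_E)_an. Then dim(π_E)_an ≥ p^e, where e is the least natural number with ℓ ≤ p^e (i.e., dim(π_E)_an is at least the smallest power of p that is ≥ ℓ). -/

import Mathlib

/-! In characteristic `p` the map `x ↦ ∑ aᵢ xᵢ ^ p` is Frobenius-semilinear, so `dim (φ_E)_an` is
the `E^p`-dimension of the `E^p`-span of the coefficients of `φ`. For `π = ⟪b₁, …, bₙ⟫` this span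
is the field `E^p(b₁, …, bₙ)`, a finite purely inseparable extension of `E^p`, so `dim (π_E)_an`
is a power `p ^ m`. The coefficients of `σ` are among those of `π`, hence `ℓ ≤ p ^ m`, and the
minimality of `e` gives `e ≤ m`. -/

open scoped BigOperators

set_option synthInstance.maxHeartbeats 1000000
set_option maxHeartbeats 1000000

/-- The subfield `F^p` of `p`-th powers of `F` (generated as a subfield). -/
def pPow (p : ℕ) (F : Type*) [Field F] : Subfield F :=
  Subfield.closure (Set.range fun x : F => x ^ p)

/-- The degree `[F^p(S) : F^p]`. -/
noncomputable def pDeg (p : ℕ) {F : Type*} [Field F] (S : Set F) : ℕ :=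
  Module.finrank ↥(pPow p F) ↥(IntermediateField.adjoin ↥(pPow p F) S)

/-- A finite family `a : ι → F` is `p`-independent over `F` if
`[F^p(a i, i : ι) : F^p] = p ^ #ι`. -/
def pIndep (p : ℕ) {F : Type*} [Field F] {ι : Type*} [Fintype ι] (a : ι → F) : Prop :=
  pDeg p (Set.range a) = p ^ Fintype.card ι

/-- The defect `i_d(φ_E)` of the diagonal quasilinear `p`-form with coefficients `a` over `E`:
the `E`-dimension of its zero set (an `E`-subspace in characteristic `p`). -/
noncomputable def defect (p : ℕ) (E : Type*) [Field E] {ι : Type*} [Fintype ι] (a : ι → E) : ℕ :=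
  Module.finrank E ↥(Submodule.span E {x : ι → E | ∑ i, a i * x i ^ p = 0})

/-- A diagonal quasilinear `p`-form is anisotropic over `E`. -/
def Anisotropic (p : ℕ) (E : Type*) [Field E] {ι : Type*} [Fintype ι] (a : ι → E) : Prop :=
  ∀ x : ι → E, ∑ i, a i * x i ^ p = 0 → x = 0

/-- The value set `D_E(φ)` of a diagonal quasilinear `p`-form. -/
def valueSet (p : ℕ) (E : Type*) [Field E] {ι : Type*} [Fintype ι] (a : ι → E) : Set E :=
  {y | ∃ x : ι → E, y = ∑ i, a i * x i ^ p}
universe u v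

open Module

section PfisterCoeff

variable (p : ℕ) {κ : Type*} [Fintype κ]

def pfisterCoeff {M : Type*} [CommMonoid M] (b : κ → M) (i : κ → Fin p) : M :=
  ∏ r, b r ^ (i r : ℕ)

theorem map_pfisterCoeff {M N : Type*} [CommMonoid M] [CommMonoid N] (f : M →* N) (b : κ → M)
    (i : κ → Fin p) : f (pfisterCoeff p b i) = pfisterCoeff p (f ∘ b) i := by
  simp [pfisterCoeff, map_prod, map_pow]

theorem one_mem_range_pfisterCoeff [NeZero p] {M : Type*} [CommMonoid M] (b : κ → M) :
    1 ∈ Set.range (pfisterCoeff p b) :=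
  ⟨0, by simp [pfisterCoeff]⟩

theorem mem_range_pfisterCoeff (hp : 1 < p) {M : Type*} [CommMonoid M] (b : κ → M) (r : κ) :
    b r ∈ Set.range (pfisterCoeff p b) := by
  classical
  refine ⟨fun s => if s = r then ⟨1, hp⟩ else ⟨0, by omega⟩, ?_⟩
  rw [pfisterCoeff, Finset.prod_eq_single r (fun s _ hs => by simp [hs]) (by simp)]
  simp

variable {R A : Type*} [CommSemiring R] [CommSemiring A] [Algebra R A]

theorem prod_pow_mem_span_pfisterCoeff [NeZero p] {b : κ → A}
    (hb : ∀ r, b r ^ p ∈ Set.range (algebraMap R A)) (k : κ → ℕ) :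
    ∏ r, b r ^ k r ∈ Submodule.span R (Set.range (pfisterCoeff p b)) := by
  choose c hc using hb
  -- `b r ^ (p * q)` is a scalar, so only the exponents modulo `p` matter
  have hsplit : ∏ r, b r ^ k r =
      (∏ r, c r ^ (k r / p)) •
        pfisterCoeff p b fun r => ⟨k r % p, Nat.mod_lt _ (NeZero.pos p)⟩ := by
    simp only [pfisterCoeff, Algebra.smul_def, map_prod, map_pow, hc, ← pow_mul,
      ← Finset.prod_mul_distrib, ← pow_add, Nat.div_add_mod]
  rw [hsplit]
  exact Submodule.smul_mem _ _ (Submodule.subset_span (Set.mem_range_self _))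

theorem span_range_pfisterCoeff [NeZero p] {b : κ → A}
    (hb : ∀ r, b r ^ p ∈ Set.range (algebraMap R A)) :
    Submodule.span R (Set.range (pfisterCoeff p b)) =
      Subalgebra.toSubmodule (Algebra.adjoin R (Set.range b)) := by
  apply le_antisymm
  · rw [Submodule.span_le]
    rintro _ ⟨i, rfl⟩
    exact (Subalgebra.mem_toSubmodule _).2 <|
      prod_mem fun r _ => pow_mem (Algebra.subset_adjoin (Set.mem_range_self r)) _
  · rw [Algebra.adjoin_eq_span, Submodule.span_le]
    intro x hx
    obtain ⟨k, rfl⟩ := Submonoid.mem_closure_range_iff_of_fintype.1 hx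
    exact prod_pow_mem_span_pfisterCoeff p hb k

end PfisterCoeff

theorem pow_mem_pPow (p : ℕ) {E : Type*} [Field E] (x : E) : x ^ p ∈ pPow p E :=
  Subfield.subset_closure ⟨x, rfl⟩

noncomputable def dimAn (p : ℕ) (E : Type*) [Field E] {ι : Type*} [Fintype ι] (a : ι → E) : ℕ :=
  Fintype.card ι - defect p E a

section ExpChar

variable (p : ℕ) {E : Type*} [Field E] [ExpChar E p]

theorem pPow_eq_fieldRange_frobenius : pPow p E = (frobenius E p).fieldRange := by
  rw [pPow, ← Subfield.closure_eq (frobenius E p).fieldRange]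
  congr 1

instance : IsPurelyInseparable (pPow p E) E :=
  (isPurelyInseparable_iff_pow_mem _ p).2 fun x =>
    ⟨1, by rw [pow_one]; exact ⟨⟨x ^ p, pow_mem_pPow p x⟩, rfl⟩⟩

def zeroSubspace {ι : Type*} [Fintype ι] (a : ι → E) : Submodule E (ι → E) where
  carrier := {x | ∑ i, a i * x i ^ p = 0}
  add_mem' {x y} hx hy := by
    simp only [Set.mem_ofPred_eq, Pi.add_apply, add_pow_expChar, mul_add,
      Finset.sum_add_distrib] at *
    rw [hx, hy, add_zero]
  zero_mem' := by simp [zero_pow (expChar_pos E p).ne']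
  smul_mem' c x hx := by
    simp only [Set.mem_ofPred_eq, Pi.smul_apply, smul_eq_mul, mul_pow, mul_left_comm _ (c ^ p),
      ← Finset.mul_sum] at *
    rw [hx, mul_zero]

theorem defect_eq_finrank_zeroSubspace {ι : Type*} [Fintype ι] (a : ι → E) :
    defect p E a = finrank E (zeroSubspace p a) := by
  rw [defect, ← Submodule.span_eq (zeroSubspace p a)]
  rfl

theorem defect_add_finrank_span_pPow {ι : Type*} [Fintype ι] (a : ι → E) :
    defect p E a + finrank (pPow p E) (Submodule.span (pPow p E) (Set.range a)) =
      Fintype.card ι := by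
  rw [pPow_eq_fieldRange_frobenius]
  set K := (frobenius E p).fieldRange
  let φ : E ≃+* K := (frobenius E p).rangeRestrictFieldEquiv
  have hφ (c : E) : (φ c : E) = c ^ p := rfl
  let L := Fintype.linearCombination K a
  have hL := L.finrank_range_add_finrank_ker
  rw [Fintype.range_linearCombination, finrank_fintype_fun_eq_card] at hL
  rw [← hL, add_comm, defect_eq_finrank_zeroSubspace]
  congr 1
  -- componentwise Frobenius identifies `W_E` with the `K`-linear relations among the coefficients
  let Φ : (ι → E) ≃+ (ι → K) := AddEquiv.piCongrRight fun _ => φ.toAddEquiv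
  have hΦ (x : ι → E) : x ∈ zeroSubspace p a ↔ Φ x ∈ LinearMap.ker L := by
    simp [zeroSubspace, L, Φ, Fintype.linearCombination_apply, Subfield.smul_def, hφ, mul_comm]
  let j : zeroSubspace p a ≃+ LinearMap.ker L :=
    { Φ.toEquiv.subtypeEquiv hΦ with map_add' := fun x y => Subtype.ext (map_add Φ x.1 y.1) }
  refine congrArg Cardinal.toNat (rank_eq_of_equiv_equiv φ j φ.bijective fun c x => ?_)
  ext i
  simp [j, Φ, φ]

theorem dimAn_eq_finrank_span {ι : Type*} [Fintype ι] (a : ι → E) :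
    dimAn p E a = finrank (pPow p E) (Submodule.span (pPow p E) (Set.range a)) := by
  have := defect_add_finrank_span_pPow p a
  rw [dimAn]
  omega

theorem dimAn_mono {ι ι' : Type*} [Fintype ι] [Fintype ι'] {a : ι → E} {a' : ι' → E}
    (h : Set.range a ⊆ Set.range a') : dimAn p E a ≤ dimAn p E a' := by
  have : FiniteDimensional (pPow p E) (Submodule.span (pPow p E) (Set.range a')) :=
    FiniteDimensional.span_of_finite _ (Set.finite_range a')
  rw [dimAn_eq_finrank_span, dimAn_eq_finrank_span]
  exact Submodule.finrank_mono (Submodule.span_mono h)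

theorem exists_dimAn_pfisterCoeff_eq_pow {κ : Type*} [Fintype κ] [DecidableEq κ] (b : κ → E) :
    ∃ m, dimAn p E (pfisterCoeff p b) = p ^ m := by
  have : NeZero p := ⟨(expChar_pos E p).ne'⟩
  have hb (r : κ) : b r ^ p ∈ Set.range (algebraMap (pPow p E) E) :=
    ⟨⟨_, pow_mem_pPow p (b r)⟩, rfl⟩
  let K := IntermediateField.adjoin (pPow p E) (Set.range b)
  have : IsPurelyInseparable (pPow p E) K := IsPurelyInseparable.tower_bot _ _ E
  have : FiniteDimensional (pPow p E) K :=
    IntermediateField.finiteDimensional_adjoin fun x _ => IsPurelyInseparable.isIntegral' _ x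
  rw [dimAn_eq_finrank_span, span_range_pfisterCoeff p hb,
    ← IntermediateField.adjoin_toSubalgebra_of_isAlgebraic
      fun x _ => (IsPurelyInseparable.isIntegral' (pPow p E) x).isAlgebraic]
  exact IsPurelyInseparable.finrank_eq_pow _ K p

end ExpChar

theorem dim_an_pfister_ge_of_subform_general (p : ℕ) [Fact p.Prime] (F : Type u) [Field F] [CharP F p]
    (n : ℕ) (a : Fin n → F)
    (s : ℕ) (hsn : s ≤ n)
    (E : Type v) [Field E] [Algebra F E] (ℓ e : ℕ)
    (hℓ : ℓ = s + 1 - defect p E (fun j : Fin (s + 1) => algebraMap F E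
      ((Fin.cons (1 : F) (fun i : Fin s => a (Fin.castLE hsn i)) : Fin (s + 1) → F) j)))
    (hemin : ∀ e', ℓ ≤ p ^ e' → e ≤ e') :
    p ^ e ≤ p ^ n - defect p E
      (fun i : Fin n → Fin p => algebraMap F E (∏ r, a r ^ (i r : ℕ))) := by
  have hp : 1 < p := (Fact.out : p.Prime).one_lt
  have : ExpChar E p := expChar_of_injective_algebraMap (algebraMap F E).injective p
  set σ : Fin (s + 1) → E := fun j => algebraMap F E
    ((Fin.cons (1 : F) (fun i : Fin s => a (Fin.castLE hsn i)) : Fin (s + 1) → F) j)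
  set b := algebraMap F E ∘ a
  have hπ : (fun i : Fin n → Fin p => algebraMap F E (∏ r, a r ^ (i r : ℕ))) = pfisterCoeff p b :=
    funext (map_pfisterCoeff p (algebraMap F E : F →* E) a)
  have hσπ : Set.range σ ⊆ Set.range (pfisterCoeff p b) := by
    rintro _ ⟨j, rfl⟩
    cases j using Fin.cases with
    | zero => simpa [σ] using one_mem_range_pfisterCoeff p b
    | succ i => simpa [σ, b] using mem_range_pfisterCoeff p hp b (Fin.castLE hsn i)
  obtain ⟨m, hm⟩ := exists_dimAn_pfisterCoeff_eq_pow p b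
  have hℓm : ℓ ≤ p ^ m :=
    calc ℓ = dimAn p E σ := by rw [hℓ, dimAn, Fintype.card_fin]
      _ ≤ dimAn p E (pfisterCoeff p b) := dimAn_mono p hσπ
      _ = p ^ m := hm
  calc p ^ e ≤ p ^ m := Nat.pow_le_pow_right hp.pos (hemin m hℓm)
    _ = dimAn p E (pfisterCoeff p b) := hm.symm
    _ = _ := by rw [dimAn, ← hπ, Fintype.card_fun, Fintype.card_fin, Fintype.card_fin]

/-- If `σ = ⟨1,a₁,…,a_s⟩` is a minimal subform of the anisotropic quasi-Pfister form
`π = ⟪a₁,…,aₙ⟫` and `ℓ = dim(σ_E)_an`, then `dim(π_E)_an` is at least the smallest power of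
`p` that is `≥ ℓ`. -/
theorem dim_an_pfister_ge_of_subform (p : ℕ) [Fact p.Prime] (F : Type u) [Field F] [CharP F p]
    (n : ℕ) (a : Fin n → F) (ha0 : ∀ i, a i ≠ 0) (hindep : pIndep p a)
    (s : ℕ) (hs1 : 1 ≤ s) (hsn : s ≤ n)
    (E : Type v) [Field E] [Algebra F E] (ℓ e : ℕ)
    (hℓ : ℓ = s + 1 - defect p E (fun j : Fin (s + 1) => algebraMap F E
      ((Fin.cons (1 : F) (fun i : Fin s => a (Fin.castLE hsn i)) : Fin (s + 1) → F) j)))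
    (he : ℓ ≤ p ^ e) (hemin : ∀ e', ℓ ≤ p ^ e' → e ≤ e') :
    p ^ e ≤ p ^ n - defect p E
      (fun i : Fin n → Fin p => algebraMap F E (∏ r, a r ^ (i r : ℕ))) :=
  dim_an_pfister_ge_of_subform_general p F n a s hsn E ℓ e hℓ hemin
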